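/- arXiv:2512.02663 — 2 statements merged into one kernel-verified Lean document; each statement's English description precedes it below -/
import Mathlib

section
/- For every integer n ≥ 2 and every real t, P(Z^L > t) ≤ P(Z > t) ≤ P(Z^U > t); that is, Z^L is stochastically dominated by Z, and Z is stochastically dominated by Z^U. -/
/-!
Driving the chain by `R^{t+1} = ⌊R^t U_{t+1}⌋` couples `Z`, `Z^L` and `Z^U` on one probability
space. Each floor loses less than `1`, so pathwise `n U_1⋯U_t - t ≤ R^t ≤ n U_1⋯U_t`: once
`n U_1⋯U_t < 1` the chain is at `0`, and once the chain is at `0` we have `n U_1⋯U_t ≤ t < t + 1`.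
Hence `Z^L ≤ Z ≤ Z^U` on every path where `n U_1⋯U_t < 1` for some `t ≥ 1` (otherwise `Z^U` is
the junk value `sInf ∅ = 0`). Almost every path is such, since a path violating this has
`U_i ≥ U_1⋯U_i ≥ 1/n` for all `i ≥ 1`, an event of probability at most `(1 - 1/n)^k` for every `k`.
-/

open MeasureTheory ProbabilityTheory Filter Set

/-- The Markov chain modeling the CD-P heuristic (unbounded reach), driven by a
sequence `U` of i.i.d. uniform random variables on `[0,1]`: it starts at `n`, and from a
state `m ≥ 1` it jumps to a uniformly chosen state in `{0, …, m-1}` (state `0` is absorbing). -/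
noncomputable def chainR {Ω : Type*} (n : ℕ) (U : ℕ → Ω → ℝ) : ℕ → Ω → ℕ
  | 0 => fun _ => n
  | (t + 1) => fun ω => ⌊(chainR n U t ω : ℝ) * U (t + 1) ω⌋₊

/-- `hitZ n U` is the hitting time of `0` for the chain `chainR n U`. -/
noncomputable def hitZ {Ω : Type*} (n : ℕ) (U : ℕ → Ω → ℝ) (ω : Ω) : ℕ :=
  sInf {t | chainR n U t ω = 0}

/-- `Z^U := min { t ≥ 1 : n·U_1⋯U_t < 1 }`. -/
noncomputable def ZU {Ω : Type*} (n : ℕ) (U : ℕ → Ω → ℝ) (ω : Ω) : ℕ :=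
  sInf {t | 1 ≤ t ∧ (n : ℝ) * ∏ i ∈ Finset.Icc 1 t, U i ω < 1}

/-- `Z^L := min { t ≥ 1 : n·U_1⋯U_t < t + 1 }`. -/
noncomputable def ZL {Ω : Type*} (n : ℕ) (U : ℕ → Ω → ℝ) (ω : Ω) : ℕ :=
  sInf {t | 1 ≤ t ∧ (n : ℝ) * ∏ i ∈ Finset.Icc 1 t, U i ω < (t : ℝ) + 1}

section Pathwise

variable {Ω : Type*} {n : ℕ} {U : ℕ → Ω → ℝ} {ω : Ω}

theorem chainR_le_mul_prod (hU : ∀ i, U i ω ∈ Icc (0 : ℝ) 1) (t : ℕ) :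
    (chainR n U t ω : ℝ) ≤ n * ∏ i ∈ Finset.Icc 1 t, U i ω := by
  induction t with
  | zero => simp [chainR]
  | succ t ih =>
    rw [Finset.prod_Icc_succ_top (by omega), ← mul_assoc]
    calc (chainR n U (t + 1) ω : ℝ) ≤ chainR n U t ω * U (t + 1) ω :=
          Nat.floor_le (mul_nonneg (Nat.cast_nonneg _) (hU _).1)
      _ ≤ _ := mul_le_mul_of_nonneg_right ih (hU _).1

theorem mul_prod_sub_le_chainR (hU : ∀ i, U i ω ∈ Icc (0 : ℝ) 1) (t : ℕ) :
    n * ∏ i ∈ Finset.Icc 1 t, U i ω - t ≤ chainR n U t ω := by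
  induction t with
  | zero => simp [chainR]
  | succ t ih =>
    rw [Finset.prod_Icc_succ_top (by omega), ← mul_assoc]
    have hfloor : (chainR n U t ω : ℝ) * U (t + 1) ω - 1 < chainR n U (t + 1) ω :=
      Nat.sub_one_lt_floor _
    obtain ⟨h0, h1⟩ := hU (t + 1)
    push_cast
    nlinarith [mul_le_mul_of_nonneg_right ih h0, mul_le_mul_of_nonneg_left h1 t.cast_nonneg]

theorem chainR_eq_zero_of_mul_prod_lt_one (hU : ∀ i, U i ω ∈ Icc (0 : ℝ) 1) {t : ℕ}
    (ht : n * ∏ i ∈ Finset.Icc 1 t, U i ω < 1) : chainR n U t ω = 0 := by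
  have hlt : (chainR n U t ω : ℝ) < 1 := (chainR_le_mul_prod hU t).trans_lt ht
  exact Nat.lt_one_iff.mp (mod_cast hlt)

theorem hitZ_le_ZU (hU : ∀ i, U i ω ∈ Icc (0 : ℝ) 1)
    (hex : ∃ s, 1 ≤ s ∧ (n : ℝ) * ∏ i ∈ Finset.Icc 1 s, U i ω < 1) :
    hitZ n U ω ≤ ZU n U ω :=
  Nat.sInf_le (chainR_eq_zero_of_mul_prod_lt_one hU (Nat.sInf_mem hex).2)

theorem ZL_le_hitZ (hU : ∀ i, U i ω ∈ Icc (0 : ℝ) 1) (hn : n ≠ 0)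
    (hhit : ∃ t, chainR n U t ω = 0) : ZL n U ω ≤ hitZ n U ω := by
  have hzero : chainR n U (hitZ n U ω) ω = 0 := Nat.sInf_mem hhit
  have hpos : 1 ≤ hitZ n U ω := by
    rw [Nat.one_le_iff_ne_zero]
    intro h
    rw [h] at hzero
    exact hn hzero
  refine Nat.sInf_le ⟨hpos, ?_⟩
  have hbound := mul_prod_sub_le_chainR (n := n) hU (hitZ n U ω)
  rw [hzero, Nat.cast_zero] at hbound
  linarith

end Pathwise

section Uniform

variable {Ω : Type*} [MeasurableSpace Ω] {μ : Measure Ω}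

theorem ae_mem_Icc_of_map_eq_uniform {X : Ω → ℝ}
    (hX : μ.map X = (volume : Measure ℝ).restrict (Icc 0 1)) : ∀ᵐ ω ∂μ, X ω ∈ Icc 0 1 := by
  have hXm : AEMeasurable X μ := AEMeasurable.of_map_ne_zero (by simp [hX])
  exact ae_of_ae_map hXm (hX ▸ ae_restrict_mem measurableSet_Icc)

theorem measure_preimage_Ici_of_map_eq_uniform {X : Ω → ℝ}
    (hX : μ.map X = (volume : Measure ℝ).restrict (Icc 0 1)) {a : ℝ} (ha : 0 ≤ a) :
    μ (X ⁻¹' Ici a) = ENNReal.ofReal (1 - a) := by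
  have hXm : AEMeasurable X μ := AEMeasurable.of_map_ne_zero (by simp [hX])
  rw [← Measure.map_apply_of_aemeasurable hXm measurableSet_Ici, hX,
    Measure.restrict_apply measurableSet_Ici, ← Ici_inter_Iic, ← inter_assoc,
    Ici_inter_Ici, sup_eq_left.mpr ha, Ici_inter_Iic, Real.volume_Icc]

theorem measure_forall_le_eq_zero {U : ℕ → Ω → ℝ} (hindep : iIndepFun U μ)
    (hunif : ∀ i, μ.map (U i) = (volume : Measure ℝ).restrict (Icc 0 1)) {a : ℝ} (ha : 0 < a) :
    μ {ω | ∀ i, 1 ≤ i → a ≤ U i ω} = 0 := by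
  have hbound (k : ℕ) : μ {ω | ∀ i, 1 ≤ i → a ≤ U i ω} ≤ ENNReal.ofReal (1 - a) ^ k :=
    calc μ {ω | ∀ i, 1 ≤ i → a ≤ U i ω} ≤ μ (⋂ i ∈ Finset.Icc 1 k, U i ⁻¹' Ici a) :=
          measure_mono fun ω hω ↦ by
            simp only [mem_iInter, Finset.mem_Icc]
            exact fun i hi ↦ hω i hi.1
      _ = ∏ i ∈ Finset.Icc 1 k, μ (U i ⁻¹' Ici a) :=
          hindep.meas_biInter fun i _ ↦ ⟨Ici a, measurableSet_Ici, rfl⟩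
      _ = ENNReal.ofReal (1 - a) ^ k := by
          simp [measure_preimage_Ici_of_map_eq_uniform (hunif _) ha.le]
  have hlt : ENNReal.ofReal (1 - a) < 1 := ENNReal.ofReal_lt_one.mpr (by linarith)
  exact le_antisymm (ge_of_tendsto' (ENNReal.tendsto_pow_atTop_nhds_zero_of_lt_one hlt) hbound)
    zero_le

theorem ae_exists_mul_prod_lt_one {U : ℕ → Ω → ℝ} (hindep : iIndepFun U μ)
    (hunif : ∀ i, μ.map (U i) = (volume : Measure ℝ).restrict (Icc 0 1)) {n : ℕ} (hn : n ≠ 0) :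
    ∀ᵐ ω ∂μ, ∃ s, 1 ≤ s ∧ (n : ℝ) * ∏ i ∈ Finset.Icc 1 s, U i ω < 1 := by
  have hn' : (0 : ℝ) < n := by positivity
  have hnull := measure_forall_le_eq_zero hindep hunif (inv_pos.mpr hn')
  filter_upwards [ae_all_iff.2 fun i ↦ ae_mem_Icc_of_map_eq_uniform (hunif i),
    measure_eq_zero_iff_ae_notMem.1 hnull] with ω hU hω
  by_contra! hge
  refine hω fun i hi ↦ ?_
  calc (n : ℝ)⁻¹ ≤ ∏ j ∈ Finset.Icc 1 i, U j ω := by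
        rw [inv_le_iff_one_le_mul₀' hn']
        exact hge i hi
    _ ≤ ∏ j ∈ {i}, U j ω :=
        Finset.prod_le_prod_of_subset_of_le_one (by simp [hi]) (fun j _ ↦ (hU j).1)
          fun j _ _ ↦ (hU j).2
    _ = U i ω := Finset.prod_singleton _ _

theorem measure_lt_natCast_le_of_ae_le {X Y : Ω → ℕ} (hXY : ∀ᵐ ω ∂μ, X ω ≤ Y ω) (t : ℝ) :
    μ {ω | t < X ω} ≤ μ {ω | t < Y ω} :=
  measure_mono_ae (hXY.mono fun _ h ht ↦ ht.trans_le (mod_cast h))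

end Uniform

theorem cdp_stochastic_domination_general
    (Ω : Type*) [MeasureSpace Ω]
    (U : ℕ → Ω → ℝ)
    (hindep : iIndepFun U ℙ)
    (hunif : ∀ i, Measure.map (U i) ℙ = (volume : Measure ℝ).restrict (Set.Icc 0 1))
    (n : ℕ) (hn : 2 ≤ n) (t : ℝ) :
    ℙ {ω | t < (ZL n U ω : ℝ)} ≤ ℙ {ω | t < (hitZ n U ω : ℝ)} ∧
      ℙ {ω | t < (hitZ n U ω : ℝ)} ≤ ℙ {ω | t < (ZU n U ω : ℝ)} := by
  have hcoupling : ∀ᵐ ω, ZL n U ω ≤ hitZ n U ω ∧ hitZ n U ω ≤ ZU n U ω := by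
    filter_upwards [ae_all_iff.2 fun i ↦ ae_mem_Icc_of_map_eq_uniform (hunif i),
      ae_exists_mul_prod_lt_one hindep hunif (n := n) (by omega)] with ω hU hex
    obtain ⟨s, hs, hlt⟩ := hex
    exact ⟨ZL_le_hitZ hU (by omega) ⟨s, chainR_eq_zero_of_mul_prod_lt_one hU hlt⟩,
      hitZ_le_ZU hU ⟨s, hs, hlt⟩⟩
  exact ⟨measure_lt_natCast_le_of_ae_le (hcoupling.mono fun _ ↦ And.left) t,
    measure_lt_natCast_le_of_ae_le (hcoupling.mono fun _ ↦ And.right) t⟩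

/-- For every integer `n ≥ 2` and every real `t`,
`P(Z^L > t) ≤ P(Z > t) ≤ P(Z^U > t)`, i.e. `Z^L ≼ Z ≼ Z^U` stochastically. -/
theorem cdp_stochastic_domination
    (Ω : Type*) [MeasureSpace Ω] [IsProbabilityMeasure (ℙ : Measure Ω)]
    (U : ℕ → Ω → ℝ) (hmeas : ∀ i, Measurable (U i))
    (hindep : iIndepFun U ℙ)
    (hunif : ∀ i, Measure.map (U i) ℙ = (volume : Measure ℝ).restrict (Set.Icc 0 1))
    (n : ℕ) (hn : 2 ≤ n) (t : ℝ) :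
    ℙ {ω | t < (ZL n U ω : ℝ)} ≤ ℙ {ω | t < (hitZ n U ω : ℝ)} ∧
      ℙ {ω | t < (hitZ n U ω : ℝ)} ≤ ℙ {ω | t < (ZU n U ω : ℝ)} :=
  cdp_stochastic_domination_general Ω U hindep hunif n hn t
end

section
/- There exists a universal constant c > 0 such that for any sequence of positive integers (k(n))_{n≥1} with k(n) ≥ n/100 for all n, the following holds: if t(n) = ⌊c·n·k(n)⌋ and X_1, ..., X_{t(n)} are i.i.d. uniform on {1, ..., n}, then the probability that (X_1, ..., X_{t(n)}) contains a non-increasing subsequence of length k(n) tends to 0 as n → ∞. -/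
/-!
First moment method. A non-increasing subsequence of length `K` among the first `t` values is
a choice of `K` positions together with a non-increasing `K`-tuple of values in `{1, …, n}`, and
each such choice occurs with probability `n⁻ᴷ`. There are at most `C(t, K) ≤ (e t / K)ᴷ`
position sets and, by stars and bars, at most `C(n + K, K) ≤ 2ⁿ⁺ᴷ ≤ 2¹⁰¹ᴷ` value tuples (as
`n ≤ 100 K`). For `t ≤ c n K` the expected number of such subsequences is thus at most
`(e c 2¹⁰¹)ᴷ`, which for `c = 2⁻¹¹⁰` is `(e / 2⁹)ᴷ → 0`, since `K ≥ n / 100 → ∞`.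
-/

open MeasureTheory ProbabilityTheory Filter

open Classical in
theorem Fintype.card_strictMono_fin_le {β : Type*} [Fintype β] [LinearOrder β] (k : ℕ) :
    Fintype.card {f : Fin k → β // StrictMono f} ≤ (Fintype.card β).choose k := by
  rw [← Fintype.card_finset_len]
  refine Fintype.card_le_of_injective
    (fun f => ⟨Finset.univ.image f.1, by
      rw [Finset.card_image_of_injective _ f.2.injective, Finset.card_univ, Fintype.card_fin]⟩) ?_
  intro f g hfg
  rw [Subtype.ext_iff, ← f.2.range_inj g.2]
  simpa [Set.ext_iff, Finset.ext_iff] using hfg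

open Classical in
theorem Fintype.card_antitone_fin_le (k m : ℕ) :
    Fintype.card {v : Fin k → Fin (m + 1) // Antitone v} ≤ (m + k).choose k := by
  let shift (v : {v : Fin k → Fin (m + 1) // Antitone v}) :
      {f : Fin k → Fin (m + k) // StrictMono f} :=
    ⟨fun a => ⟨v.1 a.rev + a, by omega⟩, fun a b hab =>
      Fin.mk_lt_mk.2 (Nat.add_lt_add_of_le_of_lt (v.2 (Fin.rev_le_rev.2 hab.le)) hab)⟩
  have shift_injective : shift.Injective := fun v w hvw => by
    ext a
    simpa [shift] using congrFun (congrArg Subtype.val hvw) a.rev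
  calc _ ≤ Fintype.card {f : Fin k → Fin (m + k) // StrictMono f} :=
        Fintype.card_le_of_injective shift shift_injective
    _ ≤ (m + k).choose k := by simpa using Fintype.card_strictMono_fin_le (β := Fin (m + k)) k

open scoped ENNReal

section FirstMoment

variable {Ω : Type*} [MeasurableSpace Ω] {μ : Measure Ω}

theorem ae_le_of_measure_eq_zero_of_lt {f : Ω → ℕ} {n : ℕ}
    (h : ∀ m, n < m → μ {ω | f ω = m} = 0) : ∀ᵐ ω ∂μ, f ω ≤ n := by
  rw [ae_iff]
  push Not
  exact measure_mono_null (fun ω hω => Set.mem_iUnion₂.2 ⟨f ω, hω, rfl⟩)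
    ((measure_biUnion_null_iff (Set.to_countable _)).2 h)

variable {X : ℕ → Ω → ℕ}

theorem ProbabilityTheory.iIndepFun.measure_forall_eq_le (hX : iIndepFun X μ) {p : ℝ≥0∞}
    (hp : ∀ i m, μ {ω | X i ω = m} ≤ p) {K : ℕ} {ι : Fin K → ℕ} (hι : ι.Injective)
    (v : Fin K → ℕ) : μ {ω | ∀ a, X (ι a) ω = v a} ≤ p ^ K := by
  have hinter : {ω | ∀ a, X (ι a) ω = v a} = ⋂ a, X (ι a) ⁻¹' {v a} := by
    ext; simp
  rw [hinter, (hX.precomp hι).meas_iInter fun a => ⟨{v a}, measurableSet_singleton _, rfl⟩]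
  exact (Finset.prod_le_pow_card Finset.univ _ p fun a _ => hp (ι a) (v a)).trans_eq (by simp)

theorem measure_exists_antitone_subseq_le (hX : iIndepFun X μ) {p : ℝ≥0∞}
    (hp : ∀ i m, μ {ω | X i ω = m} ≤ p) {n : ℕ} (hbounded : ∀ i, ∀ᵐ ω ∂μ, X i ω ≤ n)
    (K t : ℕ) :
    μ {ω | ∃ ι : Fin K → ℕ, StrictMono ι ∧ (∀ a, ι a < t) ∧ Antitone (fun a => X (ι a) ω)}
      ≤ (t.choose K * (n + K).choose K : ℕ) * p ^ K := by
  classical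
  let E (q : {f : Fin K → Fin t // StrictMono f} × {v : Fin K → Fin (n + 1) // Antitone v}) :
      Set Ω := {ω | ∀ a, X (q.1.1 a) ω = q.2.1 a}
  have hcover : {ω | ∃ ι : Fin K → ℕ, StrictMono ι ∧ (∀ a, ι a < t) ∧
      Antitone (fun a => X (ι a) ω)} ≤ᵐ[μ] ⋃ q, E q := by
    filter_upwards [ae_all_iff.2 hbounded] with ω hω ⟨ι, hι, hιt, hanti⟩
    exact Set.mem_iUnion.2 ⟨(⟨fun a => ⟨ι a, hιt a⟩, fun a b h => hι h⟩,
      ⟨fun a => ⟨X (ι a) ω, Nat.lt_succ_of_le (hω _)⟩, fun a b h => hanti h⟩), fun a => rfl⟩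
  calc _ ≤ μ (⋃ q, E q) := measure_mono_ae hcover
    _ ≤ ∑ q, μ (E q) := measure_iUnion_fintype_le μ E
    _ ≤ ∑ _q, p ^ K := Finset.sum_le_sum fun q _ =>
        hX.measure_forall_eq_le hp (fun a b h => q.1.2.injective (Fin.ext h)) _
    _ ≤ _ := by
      rw [Finset.sum_const, Finset.card_univ, Fintype.card_prod, nsmul_eq_mul]
      gcongr
      · simpa using Fintype.card_strictMono_fin_le (β := Fin t) K
      · exact Fintype.card_antitone_fin_le K n

theorem toReal_measure_exists_antitone_subseq_le_of_uniform (hX : iIndepFun X μ) {n : ℕ}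
    (hn : 0 < n) (hunif : ∀ i m, μ {ω | X i ω = m} =
      if m ∈ Finset.Icc 1 n then (n : ℝ≥0∞)⁻¹ else 0) (K t : ℕ) :
    (μ {ω | ∃ ι : Fin K → ℕ, StrictMono ι ∧ (∀ a, ι a < t) ∧
      Antitone (fun a => X (ι a) ω)}).toReal ≤ t.choose K * (n + K).choose K * (n : ℝ)⁻¹ ^ K := by
  have hp : ∀ i m, μ {ω | X i ω = m} ≤ (n : ℝ≥0∞)⁻¹ := fun i m => by
    rw [hunif]; split_ifs <;> simp
  have hbounded : ∀ i, ∀ᵐ ω ∂μ, X i ω ≤ n := fun i =>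
    ae_le_of_measure_eq_zero_of_lt fun m hm => by rw [hunif, if_neg (by simp; omega)]
  refine ENNReal.toReal_le_of_le_ofReal (by positivity) ?_
  calc _ ≤ ((t.choose K * (n + K).choose K : ℕ) : ℝ≥0∞) * (n : ℝ≥0∞)⁻¹ ^ K :=
        measure_exists_antitone_subseq_le hX hp hbounded K t
    _ = _ := by
        rw [ENNReal.ofReal_mul (by positivity), ENNReal.ofReal_mul (by positivity),
          ENNReal.ofReal_pow (by positivity), ENNReal.ofReal_inv_of_pos (by positivity)]
        simp only [ENNReal.ofReal_natCast, Nat.cast_mul]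

end FirstMoment

theorem Nat.choose_le_exp_mul_div_pow (t K : ℕ) :
    (t.choose K : ℝ) ≤ (Real.exp 1 * t / K) ^ K := by
  rcases K.eq_zero_or_pos with rfl | hK
  · simp
  have hfactorial : (K : ℝ) ^ K / K.factorial ≤ Real.exp 1 ^ K := by
    rw [← Real.exp_nat_mul, mul_one]
    exact Real.pow_div_factorial_le_exp (K : ℝ) (by positivity) K
  calc (t.choose K : ℝ) ≤ (t : ℝ) ^ K / K.factorial := Nat.choose_le_pow_div K t
    _ = (t / K : ℝ) ^ K * ((K : ℝ) ^ K / K.factorial) := by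
      rw [div_pow, div_mul_div_cancel₀ (by positivity)]
    _ ≤ (t / K : ℝ) ^ K * Real.exp 1 ^ K := by gcongr
    _ = (Real.exp 1 * t / K) ^ K := by rw [← mul_pow]; ring

theorem choose_mul_choose_mul_inv_pow_le {n K t a : ℕ} {c : ℝ} (hn : 0 < n) (hnK : n ≤ a * K)
    (ht : (t : ℝ) ≤ c * n * K) :
    (t.choose K : ℝ) * (n + K).choose K * (n : ℝ)⁻¹ ^ K ≤ (Real.exp 1 * c * 2 ^ (a + 1)) ^ K := by
  have hK : 0 < K := Nat.pos_of_ne_zero (by rintro rfl; omega)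
  have hc : 0 ≤ c := by
    have : (0 : ℝ) ≤ c * (n * K) := by rw [← mul_assoc]; exact (Nat.cast_nonneg t).trans ht
    exact nonneg_of_mul_nonneg_left this (by positivity)
  have hpositions : (t.choose K : ℝ) ≤ (Real.exp 1 * c * n) ^ K := by
    refine (Nat.choose_le_exp_mul_div_pow t K).trans (pow_le_pow_left₀ (by positivity) ?_ K)
    rw [div_le_iff₀ (by positivity), mul_assoc, mul_assoc]
    gcongr
    linarith
  have hvalues : ((n + K).choose K : ℝ) ≤ (2 ^ (a + 1)) ^ K := by
    rw [← pow_mul]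
    exact_mod_cast (Nat.choose_le_two_pow _ _).trans (Nat.pow_le_pow_right two_pos (by nlinarith))
  calc (t.choose K : ℝ) * (n + K).choose K * (n : ℝ)⁻¹ ^ K
      ≤ (Real.exp 1 * c * n) ^ K * (2 ^ (a + 1)) ^ K * (n : ℝ)⁻¹ ^ K := by gcongr
    _ = (Real.exp 1 * c * 2 ^ (a + 1)) ^ K := by
      rw [← mul_pow, ← mul_pow]
      congr 1
      field_simp

/-- There is a universal constant `c > 0` such that for any sequence of
positive integers `(k(n))` with `k(n) ≥ n/100` for all `n`, the following holds: if
`t(n) = ⌊c·n·k(n)⌋` and `X_1, …, X_{t(n)}` are i.i.d. uniform on `{1, …, n}` (formalized as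
the first `t(n)` members of an i.i.d. uniform sequence), then the probability that
`(X_1, …, X_{t(n)})` contains a non-increasing subsequence of length `k(n)` tends to `0` as
`n → ∞`. -/
theorem nonincreasing_subsequence_prob_tendsto_zero :
    ∃ c : ℝ, 0 < c ∧
      ∀ k : ℕ → ℕ, (∀ n, 1 ≤ k n) → (∀ n : ℕ, (n : ℝ) / 100 ≤ (k n : ℝ)) →
      ∀ (Ω : Type) (_ : MeasureSpace Ω) (_ : IsProbabilityMeasure (ℙ : Measure Ω))
        (X : ℕ → ℕ → Ω → ℕ), (∀ n i, Measurable (X n i)) →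
        (∀ n, iIndepFun (X n) ℙ) →
        (∀ n i m, ℙ {ω | X n i ω = m} =
          if m ∈ Finset.Icc 1 n then ((n : ENNReal))⁻¹ else 0) →
        Tendsto
          (fun n => (ℙ {ω | ∃ ι : Fin (k n) → ℕ, StrictMono ι ∧
              (∀ a, ι a < ⌊c * n * k n⌋₊) ∧
              Antitone (fun a => X n (ι a) ω)}).toReal)
          atTop (nhds 0) := by
  refine ⟨2⁻¹ ^ 110, by positivity, fun k _ hk Ω _ _ X _ hX hunif => ?_⟩
  have hq : Real.exp 1 * 2⁻¹ ^ 110 * 2 ^ (100 + 1) < 1 := by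
    norm_num
    linarith [Real.exp_one_lt_d9]
  have hk_atTop : Tendsto k atTop atTop := tendsto_natCast_atTop_iff.1 <|
    tendsto_atTop_mono hk (tendsto_natCast_atTop_atTop.atTop_div_const (by norm_num))
  refine squeeze_zero' (Eventually.of_forall fun n => ENNReal.toReal_nonneg) ?_
    ((tendsto_pow_atTop_nhds_zero_of_lt_one (by positivity) hq).comp hk_atTop)
  filter_upwards [eventually_gt_atTop 0] with n hn
  have hnk : n ≤ 100 * k n := by exact_mod_cast (by linarith [hk n] : (n : ℝ) ≤ 100 * k n)
  exact (toReal_measure_exists_antitone_subseq_le_of_uniform (hX n) hn (hunif n) _ _).trans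
    (choose_mul_choose_mul_inv_pow_le hn hnk (Nat.floor_le (by positivity)))
end
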